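/- Constants are trapped by the resolvent: if K_m ≤ f(i) ≤ K_M for all i, then the solution u of the backward-Euler resolvent equation u(i) − Δt·H_h(i, u(i), u) = f(i) satisfies K_m ≤ u(i) ≤ K_M for all i. -/

import Mathlib

open Finset

/-!
At a point where `u` is minimal every jump `u (T j i) - u i` is nonnegative, so every term
`c j i * (exp ((u (T j i) - u i) / h) - 1)` of the Hamiltonian is nonnegative, and the resolvent
equation gives `min u ≥ f ≥ K_m` there; symmetrically at a maximum. This uses only that
`x ↦ exp (x / h) - 1` is monotone and vanishes at `0`.
-/

section

variable {S ι : Type*} (J : S → Finset ι) (c : ι → S → ℝ) (T : ι → S → S) (g : ℝ → ℝ)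

-- For `g x = exp (x / h) - 1` this is `H_h(i, u i, u)`.
def jumpHamiltonian (u : S → ℝ) (i : S) : ℝ :=
  ∑ j ∈ J i, c j i * g (u (T j i) - u i)

variable {J c T g}

theorem jumpHamiltonian_nonneg_at_min (hg : Monotone g) (hg0 : g 0 = 0)
    {u : S → ℝ} {i : S} (hc : ∀ j ∈ J i, 0 ≤ c j i) (hmin : ∀ k, u i ≤ u k) :
    0 ≤ jumpHamiltonian J c T g u i :=
  sum_nonneg fun j hj =>
    mul_nonneg (hc j hj) (hg0 ▸ hg (sub_nonneg.mpr (hmin (T j i))))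

theorem jumpHamiltonian_nonpos_at_max (hg : Monotone g) (hg0 : g 0 = 0)
    {u : S → ℝ} {i : S} (hc : ∀ j ∈ J i, 0 ≤ c j i) (hmax : ∀ k, u k ≤ u i) :
    jumpHamiltonian J c T g u i ≤ 0 :=
  sum_nonpos fun j hj =>
    mul_nonpos_of_nonneg_of_nonpos (hc j hj) (hg0 ▸ hg (sub_nonpos.mpr (hmax (T j i))))

variable [Finite S] {Δt : ℝ} {u f : S → ℝ}

theorem resolvent_ge_of_forall_ge (hg : Monotone g) (hg0 : g 0 = 0)
    (hc : ∀ i, ∀ j ∈ J i, 0 ≤ c j i) (hΔt : 0 ≤ Δt)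
    (hu : ∀ i, u i - Δt * jumpHamiltonian J c T g u i = f i) {K : ℝ}
    (hf : ∀ i, K ≤ f i) (i : S) : K ≤ u i := by
  have : Nonempty S := ⟨i⟩
  obtain ⟨i₀, hmin⟩ := Finite.exists_min u
  have hH : 0 ≤ jumpHamiltonian J c T g u i₀ :=
    jumpHamiltonian_nonneg_at_min hg hg0 (hc i₀) hmin
  calc K ≤ f i₀ := hf i₀
    _ ≤ u i₀ := hu i₀ ▸ sub_le_self _ (mul_nonneg hΔt hH)
    _ ≤ u i := hmin i

theorem resolvent_le_of_forall_le (hg : Monotone g) (hg0 : g 0 = 0)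
    (hc : ∀ i, ∀ j ∈ J i, 0 ≤ c j i) (hΔt : 0 ≤ Δt)
    (hu : ∀ i, u i - Δt * jumpHamiltonian J c T g u i = f i) {K : ℝ}
    (hf : ∀ i, f i ≤ K) (i : S) : u i ≤ K := by
  have : Nonempty S := ⟨i⟩
  obtain ⟨i₀, hmax⟩ := Finite.exists_max u
  have hH : jumpHamiltonian J c T g u i₀ ≤ 0 :=
    jumpHamiltonian_nonpos_at_max hg hg0 (hc i₀) hmax
  calc u i ≤ u i₀ := hmax i
    _ ≤ f i₀ := by
      rw [← hu i₀]; linarith [mul_nonpos_of_nonneg_of_nonpos hΔt hH]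
    _ ≤ K := hf i₀

end

/-- Constants are trapped by the backward-Euler resolvent: if `K_m ≤ f ≤ K_M`
pointwise, then the resolvent solution satisfies `K_m ≤ u ≤ K_M` pointwise. -/
theorem stmt_13 {S ι : Type*} [Fintype S]
    (h Δt : ℝ) (hh : 0 < h) (hΔt : 0 < Δt)
    (J : S → Finset ι) (c : ι → S → ℝ) (T : ι → S → S)
    (hc : ∀ i, ∀ j ∈ J i, 0 ≤ c j i)
    (u f : S → ℝ) (Km KM : ℝ)
    (hu : ∀ i, u i - Δt * ∑ j ∈ J i, c j i * (Real.exp ((u (T j i) - u i) / h) - 1) = f i)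
    (hf : ∀ i, Km ≤ f i ∧ f i ≤ KM) :
    ∀ i, Km ≤ u i ∧ u i ≤ KM := by
  set g : ℝ → ℝ := fun x => Real.exp (x / h) - 1
  have hg : Monotone g := fun x y hxy => by
    simp only [g, sub_le_sub_iff_right, Real.exp_le_exp]
    exact div_le_div_of_nonneg_right hxy hh.le
  have hg0 : g 0 = 0 := by simp [g]
  intro i
  exact ⟨resolvent_ge_of_forall_ge hg hg0 hc hΔt.le hu (fun k => (hf k).1) i,
    resolvent_le_of_forall_le hg hg0 hc hΔt.le hu (fun k => (hf k).2) i⟩
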